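/- arXiv:2312.04269 — 4 statements merged into one kernel-verified Lean document; each statement's English description precedes it below -/
import Mathlib

section
/- Let F : (a,b) → ℝ be differentiable with F' monotonic on (a,b) and either F'(x) ≥ m > 0 for all x ∈ (a,b) or F'(x) ≤ −m < 0 for all x ∈ (a,b). Then |∫_a^b e^{iF(x)} dx| ≤ 4/m. -/
/-!
Since `(e^{iF})' = iF' e^{iF}`, the integrand is `-i h u` with `h = 1 / F'` and `u = (e^{iF})'`.
Every integral of `u` over a subinterval has norm at most `2`, and `h` is monotone with
`0 < h ≤ 1 / m`. A second mean value theorem bounds `‖∫ h • u‖` by `2 / m`: writing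
`h x = ∫ t in (0, 1/m], 1_{t < h x}` and exchanging the integrals reduces it to integrals of `u`
over superlevel sets of `h`, which are intervals because `h` is monotone. This is done on compact
subintervals of `(a, b)`, where `F'` is bounded, and passed to the limit; the case `F' ≤ -m`
follows by complex conjugation.
-/

open MeasureTheory Set

theorem Set.OrdConnected.ae_eq_Ioc_csInf_csSup {μ : Measure ℝ} [NullSingletonClass μ] {s : Set ℝ}
    (hs : s.OrdConnected) (hne : s.Nonempty) (hb : BddBelow s) (ha : BddAbove s) :
    s =ᵐ[μ] Ioc (sInf s) (sSup s) := by
  have hIoo : Ioo (sInf s) (sSup s) ⊆ s :=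
    IsConnected.Ioo_csInf_csSup_subset ⟨hne, hs.isPreconnected⟩ hb ha
  have hIcc : s ⊆ Icc (sInf s) (sSup s) := subset_Icc_csInf_csSup hb ha
  exact (hIcc.eventuallyLE.trans Ioc_ae_eq_Icc.symm.le).antisymm
    (Ioo_ae_eq_Ioc.symm.le.trans hIoo.eventuallyLE)

variable {E : Type*} [NormedAddCommGroup E] [NormedSpace ℝ E]

theorem norm_setIntegral_le_of_ordConnected {u : ℝ → E} {c d K : ℝ} (hcd : c ≤ d)
    (hK : ∀ p ∈ Icc c d, ∀ q ∈ Icc c d, ‖∫ x in p..q, u x‖ ≤ K) {s : Set ℝ}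
    (hs : s.OrdConnected) (hsub : s ⊆ Icc c d) : ‖∫ x in s, u x‖ ≤ K := by
  rcases s.eq_empty_or_nonempty with rfl | hne
  · simpa using hK c (left_mem_Icc.2 hcd) c (left_mem_Icc.2 hcd)
  have hb : BddBelow s := bddBelow_Icc.mono hsub
  have ha : BddAbove s := bddAbove_Icc.mono hsub
  rw [setIntegral_congr_set (hs.ae_eq_Ioc_csInf_csSup hne hb ha),
    ← intervalIntegral.integral_of_le (csInf_le_csSup hne hb ha)]
  obtain ⟨x, hx⟩ := hne
  exact hK _ ⟨le_csInf ⟨x, hx⟩ fun y hy => (hsub hy).1, (csInf_le hb hx).trans (hsub hx).2⟩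
    _ ⟨(hsub hx).1.trans (le_csSup ha hx), csSup_le ⟨x, hx⟩ fun y hy => (hsub hy).2⟩

theorem setIntegral_smul_eq_integral_setIntegral_lt {α : Type*} [MeasurableSpace α]
    [CompleteSpace E] {μ : Measure α} [SFinite μ] {A : Set α} {h : α → ℝ} {u : α → E} {M : ℝ}
    (hA : MeasurableSet A) (hh : Measurable h) (h0 : ∀ x ∈ A, 0 ≤ h x) (hM : ∀ x ∈ A, h x ≤ M)
    (hu : IntegrableOn u A μ) :
    ∫ x in A, h x • u x ∂μ = ∫ t in Ioc 0 M, ∫ x in {x | t < h x} ∩ A, u x ∂μ := by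
  set ν : Measure ℝ := volume.restrict (Ioc 0 M)
  have hD : MeasurableSet {p : α × ℝ | p.2 < h p.1} :=
    measurableSet_lt measurable_snd (hh.comp measurable_fst)
  set Φ : α × ℝ → E := {p : α × ℝ | p.2 < h p.1}.indicator (fun p => u p.1)
  have hΦ : Integrable Φ ((μ.restrict A).prod ν) := (hu.comp_fst ν).indicator hD
  have hinner : ∀ x ∈ A, ∫ t, Φ (x, t) ∂ν = h x • u x := by
    intro x hx
    have hslice : (fun t => Φ (x, t)) = (Iio (h x)).indicator (fun _ => u x) := rfl
    have hset : Iio (h x) ∩ Ioc 0 M = Ioo 0 (h x) := by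
      ext t
      simp only [mem_inter_iff, mem_Iio, mem_Ioc, mem_Ioo]
      constructor
      · rintro ⟨h1, h2, -⟩; exact ⟨h2, h1⟩
      · rintro ⟨h1, h2⟩; exact ⟨h2, h1, h2.le.trans (hM x hx)⟩
    rw [hslice, integral_indicator_const _ measurableSet_Iio,
      measureReal_restrict_apply measurableSet_Iio, hset, Real.volume_real_Ioo_of_le (h0 x hx),
      sub_zero]
  have houter : ∀ t, ∫ x, Φ (x, t) ∂(μ.restrict A) = ∫ x in {x | t < h x} ∩ A, u x ∂μ := by
    intro t
    have hmeas : MeasurableSet {x | t < h x} := measurableSet_lt measurable_const hh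
    rw [← Measure.restrict_restrict hmeas, ← integral_indicator hmeas]
    rfl
  calc ∫ x in A, h x • u x ∂μ = ∫ x, ∫ t, Φ (x, t) ∂ν ∂(μ.restrict A) :=
        (setIntegral_congr_fun hA hinner).symm
    _ = ∫ t, ∫ x, Φ (x, t) ∂(μ.restrict A) ∂ν := integral_integral_swap hΦ
    _ = _ := by simp_rw [houter]

theorem ordConnected_setOf_lt_of_monotone_or_antitone {h : ℝ → ℝ}
    (hmono : Monotone h ∨ Antitone h) (t : ℝ) : {x | t < h x}.OrdConnected :=
  ⟨fun _ hx _ hy _ hz => hmono.elim (fun hm => lt_of_lt_of_le hx (hm hz.1))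
    (fun ha => lt_of_lt_of_le hy (ha hz.2))⟩

theorem norm_intervalIntegral_smul_le_of_monotoneOn_or_antitoneOn [CompleteSpace E]
    {h : ℝ → ℝ} {u : ℝ → E} {c d M K : ℝ} (hcd : c ≤ d)
    (hmono : MonotoneOn h (Icc c d) ∨ AntitoneOn h (Icc c d))
    (h0 : ∀ x ∈ Icc c d, 0 ≤ h x) (hM : ∀ x ∈ Icc c d, h x ≤ M) (hu : IntegrableOn u (Icc c d))
    (hK : ∀ p ∈ Icc c d, ∀ q ∈ Icc c d, ‖∫ x in p..q, u x‖ ≤ K) :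
    ‖∫ x in c..d, h x • u x‖ ≤ M * K := by
  have hbdd : BddBelow (h '' Icc c d) ∧ BddAbove (h '' Icc c d) :=
    ⟨⟨0, forall_mem_image.2 h0⟩, ⟨M, forall_mem_image.2 hM⟩⟩
  obtain ⟨g, hg, hgh⟩ : ∃ g : ℝ → ℝ, (Monotone g ∨ Antitone g) ∧ EqOn h g (Icc c d) := by
    rcases hmono with hm | ha
    · obtain ⟨g, hg, hgh⟩ := hm.exists_monotone_extension hbdd.1 hbdd.2
      exact ⟨g, .inl hg, hgh⟩
    · obtain ⟨g, hg, hgh⟩ := ha.exists_antitone_extension hbdd.1 hbdd.2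
      exact ⟨g, .inr hg, hgh⟩
  have hM0 : 0 ≤ M := (h0 c (left_mem_Icc.2 hcd)).trans (hM c (left_mem_Icc.2 hcd))
  have hlayer := setIntegral_smul_eq_integral_setIntegral_lt measurableSet_Icc
    (hg.elim Monotone.measurable Antitone.measurable) (fun x hx => hgh hx ▸ h0 x hx)
    (fun x hx => hgh hx ▸ hM x hx) hu
  calc ‖∫ x in c..d, h x • u x‖ = ‖∫ x in Icc c d, g x • u x‖ := by
        rw [intervalIntegral.integral_of_le hcd, ← integral_Icc_eq_integral_Ioc,
          setIntegral_congr_fun measurableSet_Icc fun x hx => by rw [hgh hx]]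
    _ ≤ ∫ t in Ioc 0 M, K := by
        rw [hlayer]
        refine norm_integral_le_of_norm_le (integrable_const K) ?_
        exact Filter.Eventually.of_forall fun t => norm_setIntegral_le_of_ordConnected hcd hK
          ((ordConnected_setOf_lt_of_monotone_or_antitone hg t).inter ordConnected_Icc)
          inter_subset_right
    _ = M * K := by
        rw [setIntegral_const, Real.volume_real_Ioc_of_le hM0, sub_zero, smul_eq_mul]

theorem norm_intervalIntegral_le_of_forall_Ioo {f : ℝ → E} {a b C : ℝ}
    (hab : a < b) (hf : IntervalIntegrable f volume a b)
    (hC : ∀ c d, a < c → c < d → d < b → ‖∫ x in c..d, f x‖ ≤ C) :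
    ‖∫ x in a..b, f x‖ ≤ C := by
  have hleft : ∀ d ∈ Ioo a b, ‖∫ x in a..d, f x‖ ≤ C := by
    intro d hd
    have hfd : IntervalIntegrable f volume d a :=
      (hf.mono_set (uIcc_subset_uIcc_left
        (by rw [uIcc_of_le hab.le]; exact Ioo_subset_Icc_self hd))).symm
    have hcont : ContinuousWithinAt (fun c => ‖∫ x in d..c, f x‖) (Ioo a d) a :=
      ((intervalIntegral.continuousOn_primitive_interval' hfd left_mem_uIcc).norm _
        right_mem_uIcc).mono (Ioo_subset_Icc_self.trans (uIcc_of_ge hd.1.le).symm.subset)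
    simp only [intervalIntegral.integral_symm _ d, norm_neg] at hcont
    exact hcont.closure_le (by simp [closure_Ioo hd.1.ne, hd.1.le]) continuousWithinAt_const
      fun c hc => hC c d hc.1 hc.2 hd.2
  have hcont : ContinuousWithinAt (fun d => ‖∫ x in a..d, f x‖) (Ioo a b) b :=
    ((intervalIntegral.continuousOn_primitive_interval' hf left_mem_uIcc).norm _
      right_mem_uIcc).mono (Ioo_subset_Icc_self.trans (uIcc_of_le hab.le).symm.subset)
  exact hcont.closure_le (by simp [closure_Ioo hab.ne, hab.le]) continuousWithinAt_const hleft

open Complex in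
theorem norm_integral_exp_I_mul_le_of_le_deriv_Icc {F F' : ℝ → ℝ} {c d m : ℝ} (hcd : c ≤ d)
    (hm : 0 < m) (hderiv : ∀ x ∈ Icc c d, HasDerivAt F (F' x) x)
    (hmono : MonotoneOn F' (Icc c d) ∨ AntitoneOn F' (Icc c d))
    (hbound : ∀ x ∈ Icc c d, m ≤ F' x) :
    ‖∫ x in c..d, exp (I * F x)‖ ≤ 2 / m := by
  have hpos : ∀ x ∈ Icc c d, 0 < F' x := fun x hx => hm.trans_le (hbound x hx)
  set f : ℝ → ℂ := fun x => exp (I * F x)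
  set u : ℝ → ℂ := fun x => f x * (I * F' x)
  have hf : ∀ x ∈ Icc c d, HasDerivAt f (u x) x := fun x hx =>
    (((hderiv x hx).ofReal_comp).const_mul I).cexp
  have hu : IntegrableOn u (Icc c d) := by
    have hF' : IntegrableOn F' (Icc c d) :=
      hmono.elim (·.integrableOn_isCompact isCompact_Icc) (·.integrableOn_isCompact isCompact_Icc)
    exact IntegrableOn.continuousOn_mul (fun x hx => (hf x hx).continuousAt.continuousWithinAt)
      (hF'.ofReal.const_mul I) isCompact_Icc
  have hK : ∀ p ∈ Icc c d, ∀ q ∈ Icc c d, ‖∫ x in p..q, u x‖ ≤ 2 := by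
    intro p hp q hq
    have hpq : uIcc p q ⊆ Icc c d := uIcc_subset_Icc hp hq
    rw [intervalIntegral.integral_eq_sub_of_hasDerivAt (fun x hx => hf x (hpq hx))
      (hu.mono_set hpq).intervalIntegrable]
    calc ‖f q - f p‖ ≤ ‖f q‖ + ‖f p‖ := norm_sub_le _ _
      _ = 2 := by simp only [f, norm_exp_I_mul_ofReal]; norm_num
  have hsmul : EqOn (fun x => (F' x)⁻¹ • u x) (fun x => I * f x) (Icc c d) := by
    intro x hx
    have : (F' x : ℂ) ≠ 0 := ofReal_ne_zero.2 (hpos x hx).ne'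
    simp only [u, real_smul, ofReal_inv]
    field_simp
  have habel := norm_intervalIntegral_smul_le_of_monotoneOn_or_antitoneOn hcd
    (hmono.symm.imp
      (fun ha x hx y hy hxy => inv_anti₀ (hpos y hy) (ha hx hy hxy))
      (fun hm x hx y hy hxy => inv_anti₀ (hpos x hx) (hm hx hy hxy)))
    (fun x hx => (inv_pos.2 (hpos x hx)).le) (fun x hx => inv_anti₀ hm (hbound x hx)) hu hK
  rwa [intervalIntegral.integral_congr (hsmul.mono (uIcc_of_le hcd).subset),
    intervalIntegral.integral_const_mul, norm_mul, norm_I, one_mul, ← div_eq_inv_mul] at habel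

open Complex in
theorem norm_integral_exp_I_mul_le_of_le_deriv {F F' : ℝ → ℝ} {a b m : ℝ} (hab : a < b)
    (hm : 0 < m) (hderiv : ∀ x ∈ Ioo a b, HasDerivAt F (F' x) x)
    (hmono : MonotoneOn F' (Ioo a b) ∨ AntitoneOn F' (Ioo a b))
    (hbound : ∀ x ∈ Ioo a b, m ≤ F' x) :
    ‖∫ x in a..b, exp (I * F x)‖ ≤ 2 / m := by
  have hint : IntervalIntegrable (fun x => exp (I * F x)) volume a b := by
    have hcont : ContinuousOn (fun x => exp (I * F x)) (Ioo a b) := fun x hx =>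
      ((hderiv x hx).ofReal_comp.const_mul I).cexp.continuousAt.continuousWithinAt
    rw [intervalIntegrable_iff_integrableOn_Ioc_of_le hab.le, integrableOn_Ioc_iff_integrableOn_Ioo]
    exact .of_bound measure_Ioo_lt_top (hcont.aestronglyMeasurable measurableSet_Ioo) 1
      (Filter.Eventually.of_forall fun x => (norm_exp_I_mul_ofReal (F x)).le)
  refine norm_intervalIntegral_le_of_forall_Ioo hab hint fun c d hac hcd hdb => ?_
  have hsub : Icc c d ⊆ Ioo a b := Icc_subset_Ioo hac hdb
  exact norm_integral_exp_I_mul_le_of_le_deriv_Icc hcd.le hm (fun x hx => hderiv x (hsub hx))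
    (hmono.imp (·.mono hsub) (·.mono hsub)) (fun x hx => hbound x (hsub hx))

open Complex ComplexConjugate in
theorem norm_intervalIntegral_exp_neg_I_mul (F : ℝ → ℝ) (a b : ℝ) :
    ‖∫ x in a..b, exp (I * ↑(-F x))‖ = ‖∫ x in a..b, exp (I * F x)‖ := by
  have hconj : ∀ x, exp (I * ↑(-F x)) = conj (exp (I * F x)) := fun x => by
    rw [← exp_conj, map_mul, conj_I, conj_ofReal, ofReal_neg, neg_mul, mul_neg]
  simp only [hconj, intervalIntegral, integral_conj, ← map_sub, RCLike.norm_conj]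

theorem stmt_4 (a b m : ℝ) (hab : a < b) (hm : 0 < m) (F F' : ℝ → ℝ)
    (hderiv : ∀ x ∈ Set.Ioo a b, HasDerivAt F (F' x) x)
    (hmono : MonotoneOn F' (Set.Ioo a b) ∨ AntitoneOn F' (Set.Ioo a b))
    (hbound : (∀ x ∈ Set.Ioo a b, m ≤ F' x) ∨ (∀ x ∈ Set.Ioo a b, F' x ≤ -m)) :
    ‖∫ x in a..b, Complex.exp (Complex.I * (F x : ℂ))‖ ≤ 4 / m := by
  have h24 : 2 / m ≤ 4 / m := by gcongr; norm_num
  refine le_trans ?_ h24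
  rcases hbound with hpos | hneg
  · exact norm_integral_exp_I_mul_le_of_le_deriv hab hm hderiv hmono hpos
  · rw [← norm_intervalIntegral_exp_neg_I_mul]
    exact norm_integral_exp_I_mul_le_of_le_deriv hab hm (fun x hx => (hderiv x hx).neg)
      (hmono.symm.imp (·.neg) (·.neg)) fun x hx => le_neg.2 (hneg x hx)
end

section
/- For 1/2 < σ < 1 and 0 < ε < σ − 1/2, there is a constant C(σ, ε) such that for all X ≥ 2, Σ_{m < n ≤ X} 1/(m^{σ−ε} · n^{σ+1−ε} · log(n/m)) ≤ C(σ, ε). -/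
/-!
With `p = σ - ε + 1/2 > 1`, the bound `log (n / m) ≥ (n - m) / n` together with
`m ^ (1/2) * (n - m) ^ (p - 1) ≤ n ^ (σ - ε)` dominates each term by `m ^ (-p) * (n - m) ^ (-p)`.
Summing over `m < n` gives at most the Cauchy product of `∑ k ^ (-p)` with itself, i.e. `ζ(p) ^ 2`.
-/

open Finset Real

lemma Real.sub_div_le_log_div {m n : ℝ} (hm : 0 < m) (hn : 0 < n) :
    (n - m) / n ≤ log (n / m) := by
  have h := one_sub_inv_le_log_of_pos (div_pos hn hm)
  rwa [inv_div, ← div_self hn.ne', ← sub_div] at h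

lemma Real.rpow_mul_sub_rpow_le_mul_log_div {a m n : ℝ} (ha : 1 / 2 ≤ a) (hm : 0 < m)
    (hmn : m < n) :
    m ^ (a + 1 / 2) * (n - m) ^ (a + 1 / 2) ≤ m ^ a * n ^ (a + 1) * log (n / m) := by
  have hn : 0 < n := hm.trans hmn
  have hk : 0 < n - m := sub_pos.mpr hmn
  have hsqrt : m ^ (1 / 2 : ℝ) * (n - m) ^ (a - 1 / 2) ≤ n ^ a := by
    calc m ^ (1 / 2 : ℝ) * (n - m) ^ (a - 1 / 2)
        ≤ n ^ (1 / 2 : ℝ) * n ^ (a - 1 / 2) := by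
          gcongr
          linarith
      _ = n ^ a := by rw [← rpow_add hn]; ring_nf
  calc m ^ (a + 1 / 2) * (n - m) ^ (a + 1 / 2)
      = m ^ a * (m ^ (1 / 2 : ℝ) * (n - m) ^ (a - 1 / 2)) * (n - m) := by
        rw [rpow_add hm, show a + 1 / 2 = a - 1 / 2 + 1 by ring, rpow_add_one hk.ne']
        ring
    _ ≤ m ^ a * n ^ a * (n - m) := by gcongr
    _ = m ^ a * n ^ (a + 1) * ((n - m) / n) := by
        rw [rpow_add_one hn.ne']
        field_simp
    _ ≤ m ^ a * n ^ (a + 1) * log (n / m) := by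
        gcongr
        exact sub_div_le_log_div hm hn

lemma Real.one_div_mul_log_div_le {a m n : ℝ} (ha : 1 / 2 ≤ a) (hm : 0 < m) (hmn : m < n) :
    1 / (m ^ a * n ^ (a + 1) * log (n / m)) ≤
      1 / m ^ (a + 1 / 2) * (1 / (n - m) ^ (a + 1 / 2)) := by
  rw [one_div_mul_one_div]
  have hk : 0 < n - m := sub_pos.mpr hmn
  exact one_div_le_one_div_of_le (by positivity) (rpow_mul_sub_rpow_le_mul_log_div ha hm hmn)

lemma sum_Icc_sum_Ico_mul_sub_le_tsum_mul_tsum {f g : ℕ → ℝ} (hf : Summable f) (hg : Summable g)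
    (hf0 : 0 ≤ f) (hg0 : 0 ≤ g) (N : ℕ) :
    ∑ n ∈ Icc 1 N, ∑ m ∈ Ico 1 n, f m * g (n - m) ≤ (∑' k, f k) * ∑' k, g k := by
  have hfg := hf.mul_of_nonneg hg hf0 hg0
  rw [hf.tsum_mul_tsum_eq_tsum_sum_range hg hfg]
  have hterm : ∀ n, 0 ≤ ∑ k ∈ range (n + 1), f k * g (n - k) := fun n =>
    sum_nonneg fun k _ => mul_nonneg (hf0 k) (hg0 _)
  calc ∑ n ∈ Icc 1 N, ∑ m ∈ Ico 1 n, f m * g (n - m)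
      ≤ ∑ n ∈ Icc 1 N, ∑ k ∈ range (n + 1), f k * g (n - k) := by
        refine sum_le_sum fun n _ => sum_le_sum_of_subset_of_nonneg (fun k hk => ?_)
          fun k _ _ => mul_nonneg (hf0 k) (hg0 _)
        simp only [mem_Ico, mem_range] at hk ⊢
        omega
    _ ≤ ∑' n, ∑ k ∈ range (n + 1), f k * g (n - k) :=
        (summable_sum_mul_range_of_summable_mul hfg).sum_le_tsum _ fun n _ => hterm n

lemma sum_one_div_mul_log_div_le {a : ℝ} (ha : 1 / 2 < a) (N : ℕ) :
    ∑ n ∈ Icc 1 N, ∑ m ∈ Ico 1 n,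
        1 / ((m : ℝ) ^ a * (n : ℝ) ^ (a + 1) * log ((n : ℝ) / (m : ℝ)))
      ≤ (∑' k : ℕ, 1 / (k : ℝ) ^ (a + 1 / 2)) ^ 2 := by
  set f : ℕ → ℝ := fun k => 1 / (k : ℝ) ^ (a + 1 / 2)
  have hf : Summable f := summable_one_div_nat_rpow.mpr (by linarith)
  have hf0 : 0 ≤ f := fun k => by positivity
  calc ∑ n ∈ Icc 1 N, ∑ m ∈ Ico 1 n,
          1 / ((m : ℝ) ^ a * (n : ℝ) ^ (a + 1) * log ((n : ℝ) / (m : ℝ)))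
      ≤ ∑ n ∈ Icc 1 N, ∑ m ∈ Ico 1 n, f m * f (n - m) := by
        gcongr with n _ m hm
        obtain ⟨hm1, hmn⟩ := mem_Ico.mp hm
        simp only [f, Nat.cast_sub hmn.le]
        exact one_div_mul_log_div_le ha.le (by exact_mod_cast hm1) (by exact_mod_cast hmn)
    _ ≤ (∑' k, f k) * ∑' k, f k := sum_Icc_sum_Ico_mul_sub_le_tsum_mul_tsum hf hf hf0 hf0 N
    _ = (∑' k, f k) ^ 2 := (sq _).symm

theorem stmt_6_general (σ ε : ℝ) (hεσ : ε < σ - 1/2) :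
    ∃ C : ℝ, ∀ X : ℝ, 2 ≤ X →
      ∑ n ∈ Finset.Icc 1 ⌊X⌋₊, ∑ m ∈ Finset.Ico 1 n,
        1 / ((m : ℝ) ^ (σ - ε) * (n : ℝ) ^ (σ + 1 - ε) * Real.log ((n : ℝ) / (m : ℝ)))
      ≤ C := by
  refine ⟨(∑' k : ℕ, 1 / (k : ℝ) ^ (σ - ε + 1 / 2)) ^ 2, fun X _ => ?_⟩
  rw [show σ + 1 - ε = σ - ε + 1 by ring]
  exact sum_one_div_mul_log_div_le (by linarith) ⌊X⌋₊

theorem stmt_6 (σ ε : ℝ) (hσ1 : 1/2 < σ) (hσ2 : σ < 1) (hε : 0 < ε) (hεσ : ε < σ - 1/2) :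
    ∃ C : ℝ, ∀ X : ℝ, 2 ≤ X →
      ∑ n ∈ Finset.Icc 1 ⌊X⌋₊, ∑ m ∈ Finset.Ico 1 n,
        1 / ((m : ℝ) ^ (σ - ε) * (n : ℝ) ^ (σ + 1 - ε) * Real.log ((n : ℝ) / (m : ℝ)))
      ≤ C :=
  stmt_6_general σ ε hεσ
end

section
/- Let γ ∈ 𝓕 and m ≠ n positive integers. Then |∫_{max{γ(T), m, n}}^{γ(cT)} (n/m)^{it} (γ⁻¹)'(t) dt| ≤ C · (1/γ'(cT) + (γ⁻¹)'(max{γ(T), m, n})) · 1/|log(n/m)| for an absolute constant C, valid whenever max{γ(T), m, n} < γ(cT). -/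
/-!
The amplitude `φ = (γ⁻¹)' = 1 / (γ' ∘ γ⁻¹)` is positive and, since `γ'` is monotone, monotone.
Integrating `e^{iθt} φ(t)` by parts against `e^{iθt} / (iθ)` leaves the boundary terms
`φ(a) / |θ|`, `φ(b) / |θ|` and a remainder bounded by `∫ |φ'| / |θ| = |φ(b) - φ(a)| / |θ|`,
because `φ'` has constant sign. Hence `C = 2`, with `φ(γ(cT)) = 1 / γ'(cT)`.
-/

/-- The class 𝓕 of shift functions: `γ : [T₀,∞) → [T₁,∞)` is a strictly increasing
C² bijection tending to infinity, with monotonic derivative `γ'`, and there exists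
`α > 0` with `α·γ(T) ≤ γ'(T)` for all `T ≥ T₀` and `α·T₀ ≤ log γ(T₀)`. -/
def MemF (T₀ T₁ : ℝ) (γ γ' : ℝ → ℝ) : Prop :=
  0 < T₀ ∧ 0 < T₁ ∧
  StrictMonoOn γ (Set.Ici T₀) ∧
  Set.BijOn γ (Set.Ici T₀) (Set.Ici T₁) ∧
  Filter.Tendsto γ Filter.atTop Filter.atTop ∧
  (∀ T, T₀ ≤ T → HasDerivAt γ (γ' T) T) ∧
  ContDiffOn ℝ 2 γ (Set.Ici T₀) ∧
  (MonotoneOn γ' (Set.Ici T₀) ∨ AntitoneOn γ' (Set.Ici T₀)) ∧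
  ∃ α > 0, (∀ T, T₀ ≤ T → α * γ T ≤ γ' T) ∧ α * T₀ ≤ Real.log (γ T₀)

open Set Complex Filter Topology MeasureTheory intervalIntegral

lemma HasDerivAt.nonneg_of_monotoneOn_Icc {φ : ℝ → ℝ} {φ' a b x : ℝ}
    (hx : x ∈ Ioo a b) (hd : HasDerivAt φ φ' x) (hφ : MonotoneOn φ (Icc a b)) : 0 ≤ φ' := by
  refine hd.hasDerivWithinAt.nonneg_of_monotoneOn ?_ hφ
  rw [accPt_principal_iff_nhdsWithin]
  exact NeBot.mono inferInstance
    (nhdsWithin_le_of_mem (sdiff_mem_nhdsWithin_compl (Icc_mem_nhds hx.1 hx.2) {x}))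

section MonotoneAmplitude

variable {φ : ℝ → ℝ} {a b : ℝ}

lemma intervalIntegrable_deriv_of_monotoneOn (hab : a ≤ b) (hcont : ContinuousOn φ (Icc a b))
    (hdiff : ∀ x ∈ Ioo a b, DifferentiableAt ℝ φ x) (hφ : MonotoneOn φ (Icc a b)) :
    IntervalIntegrable (deriv φ) volume a b :=
  intervalIntegrable_deriv_of_nonneg (by rwa [uIcc_of_le hab])
    (by simpa [hab] using fun x hx ↦ (hdiff x hx).hasDerivAt)
    (by simpa [hab] using fun x hx ↦ (hdiff x hx).hasDerivAt.nonneg_of_monotoneOn_Icc hx hφ)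

lemma norm_integral_deriv_mul_le_of_monotoneOn {e : ℝ → ℂ} {K : ℝ} (hab : a ≤ b)
    (hcont : ContinuousOn φ (Icc a b)) (hdiff : ∀ x ∈ Ioo a b, DifferentiableAt ℝ φ x)
    (hφ : MonotoneOn φ (Icc a b)) (he : ∀ t, ‖e t‖ ≤ K) :
    ‖∫ t in a..b, ((deriv φ t : ℝ) : ℂ) * e t‖ ≤ (φ b - φ a) * K := by
  have hφ'_int := intervalIntegrable_deriv_of_monotoneOn hab hcont hdiff hφ
  calc ‖∫ t in a..b, ((deriv φ t : ℝ) : ℂ) * e t‖ ≤ ∫ t in a..b, deriv φ t * K := by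
        refine norm_integral_le_of_norm_le hab ?_ (hφ'_int.mul_const _)
        filter_upwards [measure_eq_zero_iff_ae_notMem.mp (measure_singleton b)] with t htb ht
        have ht' : t ∈ Ioo a b := ⟨ht.1, lt_of_le_of_ne ht.2 htb⟩
        have hφ't := (hdiff t ht').hasDerivAt.nonneg_of_monotoneOn_Icc ht' hφ
        rw [norm_mul, norm_real, Real.norm_of_nonneg hφ't]
        exact mul_le_mul_of_nonneg_left (he t) hφ't
    _ = (φ b - φ a) * K := by
        rw [intervalIntegral.integral_mul_const,
          integral_eq_sub_of_hasDerivAt_of_le hab hcont (fun x hx ↦ (hdiff x hx).hasDerivAt)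
            hφ'_int]

variable {θ : ℝ}

lemma norm_integral_cexp_mul_le_of_monotoneOn (hθ : θ ≠ 0) (hab : a ≤ b)
    (hcont : ContinuousOn φ (Icc a b)) (hdiff : ∀ x ∈ Ioo a b, DifferentiableAt ℝ φ x)
    (hφ : MonotoneOn φ (Icc a b)) :
    ‖∫ t in a..b, cexp (I * t * θ) * φ t‖ ≤ (|φ a| + |φ b| + (φ b - φ a)) / |θ| := by
  set e : ℝ → ℂ := fun t ↦ cexp (I * t * θ) / (I * θ)
  have hIθ : I * θ ≠ 0 := mul_ne_zero I_ne_zero (ofReal_ne_zero.mpr hθ)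
  have he_deriv (t : ℝ) : HasDerivAt e (cexp (I * t * θ)) t := by
    have := (((hasDerivAt_id (t : ℂ)).const_mul I).mul_const (θ : ℂ)).cexp.comp_ofReal
      |>.div_const (I * θ)
    simpa [field, hIθ] using this
  have he_norm (t : ℝ) : ‖e t‖ = 1 / |θ| := by
    simp [e, Complex.norm_exp]
  have hparts : ∫ t in a..b, cexp (I * t * θ) * φ t
      = φ b * e b - φ a * e a - ∫ t in a..b, ((deriv φ t : ℝ) : ℂ) * e t := by
    simp_rw [mul_comm (cexp _)]
    have hφ'_int := intervalIntegrable_deriv_of_monotoneOn hab hcont hdiff hφ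
    refine integral_mul_deriv_eq_deriv_mul_of_hasDerivAt (u := fun t ↦ (φ t : ℂ))
      (v := e) (u' := fun t ↦ ((deriv φ t : ℝ) : ℂ)) ?_ ?_ ?_ (fun t _ ↦ he_deriv t) ?_ ?_
    · exact continuous_ofReal.comp_continuousOn (by rwa [uIcc_of_le hab])
    · exact fun t _ ↦ (he_deriv t).continuousAt.continuousWithinAt
    · intro x hx
      rw [min_eq_left hab, max_eq_right hab] at hx
      exact (hdiff x hx).hasDerivAt.ofReal_comp
    · exact ⟨hφ'_int.1.ofReal, hφ'_int.2.ofReal⟩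
    · exact (by fun_prop : Continuous fun t : ℝ ↦ cexp (I * t * θ)).intervalIntegrable a b
  have hrest := norm_integral_deriv_mul_le_of_monotoneOn hab hcont hdiff hφ (he_norm · |>.le)
  calc ‖∫ t in a..b, cexp (I * t * θ) * φ t‖
      ≤ ‖(φ b : ℂ) * e b‖ + ‖(φ a : ℂ) * e a‖ + ‖∫ t in a..b, ((deriv φ t : ℝ) : ℂ) * e t‖ := by
        rw [hparts]
        exact (norm_sub_le _ _).trans (add_le_add_left (norm_sub_le _ _) _)
    _ ≤ |φ b| * (1 / |θ|) + |φ a| * (1 / |θ|) + (φ b - φ a) * (1 / |θ|) := by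
        simp only [norm_mul, he_norm, norm_real, Real.norm_eq_abs]
        linarith [hrest]
    _ = (|φ a| + |φ b| + (φ b - φ a)) / |θ| := by ring

lemma norm_integral_cexp_mul_le_of_monotoneOn_or_antitoneOn (hθ : θ ≠ 0) (hab : a ≤ b)
    (hcont : ContinuousOn φ (Icc a b)) (hdiff : ∀ x ∈ Ioo a b, DifferentiableAt ℝ φ x)
    (hφ : MonotoneOn φ (Icc a b) ∨ AntitoneOn φ (Icc a b)) :
    ‖∫ t in a..b, cexp (I * t * θ) * φ t‖ ≤ 2 * (|φ a| + |φ b|) / |θ| := by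
  rcases hφ with hmono | hanti
  · refine (norm_integral_cexp_mul_le_of_monotoneOn hθ hab hcont hdiff hmono).trans ?_
    gcongr
    linarith [le_abs_self (φ b), neg_abs_le (φ a)]
  · have h := norm_integral_cexp_mul_le_of_monotoneOn (φ := -φ) hθ hab hcont.neg
      (fun x hx ↦ (hdiff x hx).neg) hanti.neg
    simp only [Pi.neg_apply, ofReal_neg, mul_neg, intervalIntegral.integral_neg, norm_neg,
      abs_neg] at h
    refine h.trans ?_
    gcongr
    linarith [le_abs_self (φ a), neg_abs_le (φ b)]

end MonotoneAmplitude

namespace MemF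

variable {T₀ T₁ : ℝ} {γ γ' γinv γinv' : ℝ → ℝ}

lemma le_apply (hF : MemF T₀ T₁ γ γ') {x : ℝ} (hx : T₀ ≤ x) : T₁ ≤ γ x := by
  obtain ⟨-, -, -, hbij, -⟩ := hF
  exact hbij.mapsTo hx

lemma deriv_pos (hF : MemF T₀ T₁ γ γ') {x : ℝ} (hx : T₀ ≤ x) : 0 < γ' x := by
  have hγx := hF.le_apply hx
  obtain ⟨-, hT₁, -, -, -, -, -, -, α, hα, hαγ, -⟩ := hF
  exact (mul_pos hα (hT₁.trans_le hγx)).trans_le (hαγ x hx)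

lemma contDiffOn_deriv (hF : MemF T₀ T₁ γ γ') : ContDiffOn ℝ 1 γ' (Ici T₀) := by
  obtain ⟨-, -, -, -, -, hγ', hC2, -⟩ := hF
  exact (hC2.derivWithin (uniqueDiffOn_Ici T₀) (by norm_num)).congr fun x hx ↦
    ((hγ' x hx).hasDerivWithinAt.derivWithin (uniqueDiffOn_Ici T₀ x hx)).symm

lemma le_inv (hF : MemF T₀ T₁ γ γ') (hinv₁ : ∀ x, T₀ ≤ x → γinv (γ x) = x) {y : ℝ}
    (hy : T₁ ≤ y) : T₀ ≤ γinv y := by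
  obtain ⟨-, -, -, hbij, -⟩ := hF
  obtain ⟨x, hx, rfl⟩ := hbij.surjOn hy
  rwa [hinv₁ x hx]

lemma lt_inv_iff (hF : MemF T₀ T₁ γ γ') (hinv₁ : ∀ x, T₀ ≤ x → γinv (γ x) = x)
    (hinv₂ : ∀ y, T₁ ≤ y → γ (γinv y) = y) {x y : ℝ} (hx : T₀ ≤ x) (hy : T₁ ≤ y) :
    x < γinv y ↔ γ x < y := by
  have hγinv := hF.le_inv hinv₁ hy
  obtain ⟨-, -, hmono, -⟩ := hF
  rw [← hmono.lt_iff_lt hx hγinv, hinv₂ y hy]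

lemma monotoneOn_inv (hF : MemF T₀ T₁ γ γ') (hinv₁ : ∀ x, T₀ ≤ x → γinv (γ x) = x)
    (hinv₂ : ∀ y, T₁ ≤ y → γ (γinv y) = y) : MonotoneOn γinv (Ici T₁) := by
  intro y hy y' hy' hyy'
  by_contra! h
  rw [hF.lt_inv_iff hinv₁ hinv₂ (hF.le_inv hinv₁ hy') hy, hinv₂ y' hy'] at h
  exact h.not_ge hyy'

lemma inv_deriv_eq (hF : MemF T₀ T₁ γ γ') (hinv₁ : ∀ x, T₀ ≤ x → γinv (γ x) = x)
    (hinv₂ : ∀ y, T₁ ≤ y → γ (γinv y) = y) (hder : ∀ y, T₁ ≤ y → HasDerivAt γinv (γinv' y) y)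
    {y : ℝ} (hy : T₁ ≤ y) : γinv' y = (γ' (γinv y))⁻¹ := by
  have hx := hF.le_inv hinv₁ hy
  obtain ⟨-, -, -, -, -, hγ', -⟩ := hF
  have hcomp : HasDerivWithinAt (γ ∘ γinv) (γ' (γinv y) * γinv' y) (Ici T₁) y :=
    ((hγ' _ hx).comp y (hder y hy)).hasDerivWithinAt
  have hid : HasDerivWithinAt (γ ∘ γinv) 1 (Ici T₁) y :=
    (hasDerivWithinAt_id y _).congr (fun z hz ↦ hinv₂ z hz) (hinv₂ y hy)
  refine eq_inv_of_mul_eq_one_left ?_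
  rw [mul_comm]
  exact (uniqueDiffOn_Ici T₁ y hy).eq_deriv _ hcomp hid

lemma inv_deriv_pos (hF : MemF T₀ T₁ γ γ') (hinv₁ : ∀ x, T₀ ≤ x → γinv (γ x) = x)
    (hinv₂ : ∀ y, T₁ ≤ y → γ (γinv y) = y) (hder : ∀ y, T₁ ≤ y → HasDerivAt γinv (γinv' y) y)
    {y : ℝ} (hy : T₁ ≤ y) : 0 < γinv' y := by
  rw [hF.inv_deriv_eq hinv₁ hinv₂ hder hy]
  exact inv_pos.mpr (hF.deriv_pos (hF.le_inv hinv₁ hy))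

lemma continuousOn_inv_deriv (hF : MemF T₀ T₁ γ γ') (hinv₁ : ∀ x, T₀ ≤ x → γinv (γ x) = x)
    (hinv₂ : ∀ y, T₁ ≤ y → γ (γinv y) = y) (hder : ∀ y, T₁ ≤ y → HasDerivAt γinv (γinv' y) y) :
    ContinuousOn γinv' (Ici T₁) := by
  have hγinv : ContinuousOn γinv (Ici T₁) := fun y hy ↦
    (hder y hy).continuousAt.continuousWithinAt
  refine ((hF.contDiffOn_deriv.continuousOn.comp hγinv fun y hy ↦ hF.le_inv hinv₁ hy).inv₀
    fun y hy ↦ (hF.deriv_pos (hF.le_inv hinv₁ hy)).ne').congr fun y hy ↦ ?_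
  exact hF.inv_deriv_eq hinv₁ hinv₂ hder hy

lemma differentiableAt_inv_deriv (hF : MemF T₀ T₁ γ γ')
    (hinv₁ : ∀ x, T₀ ≤ x → γinv (γ x) = x) (hinv₂ : ∀ y, T₁ ≤ y → γ (γinv y) = y)
    (hder : ∀ y, T₁ ≤ y → HasDerivAt γinv (γinv' y) y) {y : ℝ} (hy : T₁ < y)
    (hγinv : T₀ < γinv y) : DifferentiableAt ℝ γinv' y := by
  have hγ' : DifferentiableAt ℝ γ' (γinv y) :=
    (hF.contDiffOn_deriv.differentiableOn one_ne_zero _ hγinv.le).differentiableAt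
      (Ici_mem_nhds hγinv)
  refine ((hγ'.comp y (hder y hy.le).differentiableAt).inv
    (hF.deriv_pos hγinv.le).ne').congr_of_eventuallyEq ?_
  filter_upwards [Ici_mem_nhds hy] with z hz using hF.inv_deriv_eq hinv₁ hinv₂ hder hz

lemma monotoneOn_or_antitoneOn_inv_deriv (hF : MemF T₀ T₁ γ γ')
    (hinv₁ : ∀ x, T₀ ≤ x → γinv (γ x) = x) (hinv₂ : ∀ y, T₁ ≤ y → γ (γinv y) = y)
    (hder : ∀ y, T₁ ≤ y → HasDerivAt γinv (γinv' y) y) :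
    MonotoneOn γinv' (Ici T₁) ∨ AntitoneOn γinv' (Ici T₁) := by
  have hmono := hF.monotoneOn_inv hinv₁ hinv₂
  have heq {y : ℝ} (hy : y ∈ Ici T₁) := hF.inv_deriv_eq hinv₁ hinv₂ hder hy
  have hpos {y : ℝ} (hy : y ∈ Ici T₁) := hF.deriv_pos (hF.le_inv hinv₁ hy)
  have hmem {y : ℝ} (hy : y ∈ Ici T₁) : γinv y ∈ Ici T₀ := hF.le_inv hinv₁ hy
  obtain ⟨-, -, -, -, -, -, -, hγ'_mono, -⟩ := hF
  rcases hγ'_mono with hγ' | hγ'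
  · refine Or.inr fun y hy y' hy' hyy' ↦ ?_
    rw [heq hy, heq hy']
    exact inv_anti₀ (hpos hy) (hγ' (hmem hy) (hmem hy') (hmono hy hy' hyy'))
  · refine Or.inl fun y hy y' hy' hyy' ↦ ?_
    rw [heq hy, heq hy']
    exact inv_anti₀ (hpos hy') (hγ' (hmem hy) (hmem hy') (hmono hy hy' hyy'))

end MemF

theorem stmt_9 :
    ∃ C : ℝ, 0 < C ∧
      ∀ (T₀ T₁ : ℝ) (γ γ' γinv γinv' : ℝ → ℝ),
        MemF T₀ T₁ γ γ' →
        (∀ x, T₀ ≤ x → γinv (γ x) = x) →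
        (∀ y, T₁ ≤ y → γ (γinv y) = y) →
        (∀ y, T₁ ≤ y → HasDerivAt γinv (γinv' y) y) →
        ∀ (m n : ℕ), 0 < m → 0 < n → m ≠ n →
        ∀ (c T : ℝ), 1 < c → T₀ ≤ T →
        max (γ T) (max (m : ℝ) (n : ℝ)) < γ (c * T) →
        ‖∫ t in max (γ T) (max (m : ℝ) (n : ℝ))..γ (c * T),
            Complex.exp (Complex.I * (t : ℂ) * (Real.log ((n : ℝ) / (m : ℝ)) : ℂ))
              * (γinv' t : ℂ)‖
          ≤ C * (1 / γ' (c * T) + γinv' (max (γ T) (max (m : ℝ) (n : ℝ))))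
              * (1 / |Real.log ((n : ℝ) / (m : ℝ))|) := by
  refine ⟨2, two_pos, ?_⟩
  intro T₀ T₁ γ γ' γinv γinv' hF hinv₁ hinv₂ hder m n hm hn hmn c T hc hT hab
  set a := max (γ T) (max (m : ℝ) (n : ℝ))
  have hθ : Real.log ((n : ℝ) / m) ≠ 0 := by
    refine Real.log_ne_zero_of_pos_of_ne_one (by positivity) ?_
    rw [Ne, div_eq_one_iff_eq (by positivity)]
    exact_mod_cast hmn.symm
  have hT₁a : T₁ ≤ a := (hF.le_apply hT).trans (le_max_left _ _)
  have hcT : T₀ ≤ c * T := hT.trans (le_mul_of_one_le_left (hF.1.le.trans hT) hc.le)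
  have hsub : Icc a (γ (c * T)) ⊆ Ici T₁ := Icc_subset_Ici_self.trans (Ici_subset_Ici.mpr hT₁a)
  have hinv_gt {y : ℝ} (hy : y ∈ Ioo a (γ (c * T))) : T₀ < γinv y :=
    hT.trans_lt <| (hF.lt_inv_iff hinv₁ hinv₂ hT (hT₁a.trans hy.1.le)).mpr
      ((le_max_left _ _).trans_lt hy.1)
  have hbound := norm_integral_cexp_mul_le_of_monotoneOn_or_antitoneOn hθ hab.le
    ((hF.continuousOn_inv_deriv hinv₁ hinv₂ hder).mono hsub)
    (fun y hy ↦ hF.differentiableAt_inv_deriv hinv₁ hinv₂ hder (hT₁a.trans_lt hy.1) (hinv_gt hy))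
    ((hF.monotoneOn_or_antitoneOn_inv_deriv hinv₁ hinv₂ hder).imp (·.mono hsub) (·.mono hsub))
  have hend : γinv' (γ (c * T)) = 1 / γ' (c * T) := by
    rw [hF.inv_deriv_eq hinv₁ hinv₂ hder (hF.le_apply hcT), hinv₁ _ hcT, one_div]
  rw [abs_of_pos (hF.inv_deriv_pos hinv₁ hinv₂ hder hT₁a),
    abs_of_pos (hF.inv_deriv_pos hinv₁ hinv₂ hder (hF.le_apply hcT)), hend] at hbound
  exact hbound.trans_eq (by ring)
end

section
/- Let (γ₁, ..., γ_r) be admissible and let 𝒫₀ be a finite set of primes. For any tuple of integer vectors (n_{jp})_{1≤j≤r, p∈𝒫₀} not all zero, the normalized integral (1/T)∫_T^{2T} Π_{j=1}^r Π_{p∈𝒫₀} p^{−i n_{jp} γ_j(τ)} dτ tends to 0 as T → ∞. -/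
/-- Admissibility of a tuple `(γ₁, …, γ_r)`: for every nonzero `(c₁, …, c_r) ∈ ℝ^r`
there are `m > 0` and `T' > 0` such that `c₁γ₁' + ⋯ + c_rγ_r'` is monotonic on
`(T', ∞)` and `> m` or `< -m` there. -/
def Admissible (r : ℕ) (γ γ' : Fin r → ℝ → ℝ) : Prop :=
  ∀ c : Fin r → ℝ, c ≠ 0 →
    ∃ m > (0:ℝ), ∃ T' > (0:ℝ),
      (MonotoneOn (fun τ => ∑ j, c j * γ' j τ) (Set.Ioi T') ∨
        AntitoneOn (fun τ => ∑ j, c j * γ' j τ) (Set.Ioi T')) ∧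
      ((∀ τ, T' < τ → m < ∑ j, c j * γ' j τ) ∨
        (∀ τ, T' < τ → (∑ j, c j * γ' j τ) < -m))

open Set Filter Topology MeasureTheory Complex

lemma Nat.factorization_prod_pow_of_prime {s : Finset ℕ} (hs : ∀ p ∈ s, p.Prime) (b : ℕ → ℕ)
    {q : ℕ} (hq : q ∈ s) : (∏ p ∈ s, p ^ b p).factorization q = b q := by
  rw [Nat.factorization_prod fun p hp => pow_ne_zero _ (hs p hp).ne_zero, Finset.sum_apply',
    Finset.sum_eq_single_of_mem q hq fun p hp hpq => by simp [(hs p hp).factorization_pow, hpq]]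
  simp [(hs q hq).factorization_pow]

lemma eq_zero_of_sum_mul_log_prime_eq_zero {s : Finset ℕ} (hs : ∀ p ∈ s, p.Prime) {a : ℕ → ℤ}
    (h : ∑ p ∈ s, (a p : ℝ) * Real.log p = 0) {q : ℕ} (hq : q ∈ s) : a q = 0 := by
  have hlog (e : ℕ → ℕ) :
      ∑ p ∈ s, (e p : ℝ) * Real.log p = Real.log (∏ p ∈ s, p ^ e p : ℕ) := by
    push_cast
    rw [Real.log_prod fun p hp => pow_ne_zero _ (Nat.cast_ne_zero.2 (hs p hp).ne_zero)]
    simp [Real.log_pow]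
  have hpos (e : ℕ → ℕ) : 0 < ((∏ p ∈ s, p ^ e p : ℕ) : ℝ) := by
    exact_mod_cast Finset.prod_pos fun p hp => pow_pos (hs p hp).pos _
  -- split `a` into its positive and negative parts
  have hprod : ∏ p ∈ s, p ^ (a p).toNat = ∏ p ∈ s, p ^ (-a p).toNat := by
    refine Nat.cast_injective (R := ℝ) (Real.log_injOn_pos (hpos _) (hpos _) ?_)
    rw [← hlog, ← hlog, ← sub_eq_zero, ← Finset.sum_sub_distrib, ← h]
    refine Finset.sum_congr rfl fun p _ => ?_
    rw [← sub_mul]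
    congr 1
    exact_mod_cast Int.toNat_sub_toNat_neg (a p)
  have h := congrArg (Nat.factorization · q) hprod
  simp only [Nat.factorization_prod_pow_of_prime hs _ hq] at h
  omega

lemma prod_prod_cexp_neg_I_mul {ι κ : Type*} [Fintype ι] (s : Finset κ) (n : ι → κ → ℤ)
    (w : κ → ℝ) (x : ι → ℝ) :
    ∏ j, ∏ p ∈ s, cexp (-I * (n j p : ℂ) * (x j : ℂ) * (w p : ℂ)) =
      cexp (-I * ↑(∑ j, (∑ p ∈ s, (n j p : ℝ) * w p) * x j)) := by
  simp_rw [← Complex.exp_sum]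
  congr 1
  push_cast
  simp_rw [Finset.mul_sum, Finset.sum_mul, Finset.mul_sum]
  exact Finset.sum_congr rfl fun j _ => Finset.sum_congr rfl fun p _ => by ring

section

variable {E : Type*} [NormedAddCommGroup E] [NormedSpace ℝ E] {u : ℝ → ℝ} {v : ℝ → E} {a b : ℝ}

lemma MonotoneOn.norm_integral_deriv_smul_le (hab : a ≤ b) (hu : MonotoneOn u (Icc a b))
    (hv : ∀ t ∈ Ioo a b, ‖v t‖ ≤ 1) : ‖∫ t in a..b, deriv u t • v t‖ ≤ u b - u a := by
  have hu' : MonotoneOn u (uIcc a b) := by rwa [uIcc_of_le hab]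
  refine (intervalIntegral.norm_integral_le_of_norm_le hab ?_ hu'.intervalIntegrable_deriv).trans ?_
  · filter_upwards [Measure.ae_ne volume b] with t htb ht
    have ht' : t ∈ Ioo a b := ⟨ht.1, ht.2.lt_of_ne htb⟩
    have hderiv : 0 ≤ deriv u t := by
      rw [← derivWithin_of_mem_nhds (Icc_mem_nhds ht'.1 ht'.2)]
      exact hu.derivWithin_nonneg
    rw [norm_smul, Real.norm_of_nonneg hderiv]
    exact mul_le_of_le_one_right hderiv (hv t ht')
  · have h := hu'.intervalIntegral_deriv_mem_uIcc
    rw [uIcc_of_le (sub_nonneg.2 (hu (left_mem_Icc.2 hab) (right_mem_Icc.2 hab) hab))] at h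
    exact h.2

lemma intervalIntegrable_deriv_of_monotoneOn_or_antitoneOn
    (hu : MonotoneOn u (uIcc a b) ∨ AntitoneOn u (uIcc a b)) :
    IntervalIntegrable (deriv u) volume a b := by
  rcases hu with hu | hu
  · exact hu.intervalIntegrable_deriv
  · convert hu.neg.intervalIntegrable_deriv.neg using 1
    ext
    simp

lemma norm_integral_deriv_smul_le_abs_sub (hab : a ≤ b)
    (hu : MonotoneOn u (Icc a b) ∨ AntitoneOn u (Icc a b)) (hv : ∀ t ∈ Ioo a b, ‖v t‖ ≤ 1) :
    ‖∫ t in a..b, deriv u t • v t‖ ≤ |u b - u a| := by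
  rcases hu with hu | hu
  · exact (hu.norm_integral_deriv_smul_le hab hv).trans (le_abs_self _)
  · have h := hu.neg.norm_integral_deriv_smul_le hab hv
    simp only [deriv.fun_neg, neg_smul, intervalIntegral.integral_neg, norm_neg] at h
    calc _ ≤ -u b - -u a := h
      _ = u a - u b := by ring
      _ ≤ |u b - u a| := abs_sub_comm (u b) (u a) ▸ le_abs_self _

end

lemma integral_cexp_neg_I_mul_eq_sub_integral {φ f : ℝ → ℝ} {a b : ℝ} (hab : a ≤ b)
    (hφ : ∀ τ ∈ Icc a b, HasDerivAt φ (f τ) τ) (hf : DifferentiableOn ℝ f (Icc a b))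
    (hf0 : ∀ τ ∈ Icc a b, f τ ≠ 0)
    (hint : IntervalIntegrable (deriv fun τ => (f τ)⁻¹) volume a b) :
    ∫ τ in a..b, cexp (-I * φ τ) =
      (f b)⁻¹ • (I * cexp (-I * φ b)) - (f a)⁻¹ • (I * cexp (-I * φ a)) -
        ∫ τ in a..b, deriv (fun τ => (f τ)⁻¹) τ • (I * cexp (-I * φ τ)) := by
  set e : ℝ → ℂ := fun τ => cexp (-I * φ τ)
  have hde (τ) (hτ : τ ∈ Icc a b) : HasDerivAt e (e τ * (-I * f τ)) τ :=
    ((hφ τ hτ).ofReal_comp.const_mul (-I)).cexp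
  have hIe (τ) (hτ : τ ∈ Icc a b) : HasDerivAt (fun τ => I * e τ) (f τ * e τ) τ := by
    refine ((hde τ hτ).const_mul I).congr_deriv ?_
    linear_combination -((f τ : ℂ) * e τ) * I_sq
  have hIoo : Ioo (min a b) (max a b) = Ioo a b := by rw [min_eq_left hab, max_eq_right hab]
  have hu (τ) (hτ : τ ∈ Ioo (min a b) (max a b)) :
      HasDerivAt (fun τ => (f τ)⁻¹) (deriv (fun τ => (f τ)⁻¹) τ) τ := by
    rw [hIoo] at hτ
    exact ((hf.differentiableAt (Icc_mem_nhds hτ.1 hτ.2)).inv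
      (hf0 τ (Ioo_subset_Icc_self hτ))).hasDerivAt
  have hcont_e : ContinuousOn e (uIcc a b) := fun τ hτ =>
    (hde τ (uIcc_of_le hab ▸ hτ)).continuousAt.continuousWithinAt
  have hcont_f : ContinuousOn f (uIcc a b) := uIcc_of_le hab ▸ hf.continuousOn
  calc ∫ τ in a..b, e τ = ∫ τ in a..b, (f τ)⁻¹ • (f τ * e τ) := by
        refine intervalIntegral.integral_congr fun τ hτ => ?_
        simp [real_smul, ← mul_assoc,
          inv_mul_cancel₀ (ofReal_ne_zero.2 (hf0 τ (uIcc_of_le hab ▸ hτ)))]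
    _ = _ := intervalIntegral.integral_smul_deriv_eq_deriv_smul_of_hasDerivAt
        (hcont_f.inv₀ fun τ hτ => hf0 τ (uIcc_of_le hab ▸ hτ)) (continuousOn_const.mul hcont_e)
        hu (fun τ hτ => hIe τ (Ioo_subset_Icc_self (hIoo ▸ hτ))) hint
        ((continuous_ofReal.comp_continuousOn hcont_f).mul hcont_e).intervalIntegrable

lemma norm_integral_cexp_neg_I_mul_le_of_le_deriv {φ f : ℝ → ℝ} {a b m : ℝ} (hm : 0 < m)
    (hab : a ≤ b) (hφ : ∀ τ ∈ Icc a b, HasDerivAt φ (f τ) τ) (hf : DifferentiableOn ℝ f (Icc a b))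
    (hmono : MonotoneOn f (Icc a b) ∨ AntitoneOn f (Icc a b)) (hfm : ∀ τ ∈ Icc a b, m ≤ f τ) :
    ‖∫ τ in a..b, cexp (-I * φ τ)‖ ≤ 3 / m := by
  have hf0 (τ) (hτ : τ ∈ Icc a b) : 0 < f τ := hm.trans_le (hfm τ hτ)
  have hinv_le (τ) (hτ : τ ∈ Icc a b) : (f τ)⁻¹ ≤ m⁻¹ := inv_anti₀ hm (hfm τ hτ)
  have hinv_mono : MonotoneOn (fun τ => (f τ)⁻¹) (Icc a b) ∨
      AntitoneOn (fun τ => (f τ)⁻¹) (Icc a b) := by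
    refine hmono.symm.imp (fun h x hx y hy hxy => ?_) (fun h x hx y hy hxy => ?_)
    · exact inv_anti₀ (hf0 y hy) (h hx hy hxy)
    · exact inv_anti₀ (hf0 x hx) (h hx hy hxy)
  have hnorm (τ) : ‖I * cexp (-I * φ τ)‖ = 1 := by
    simpa [mul_comm] using norm_exp_ofReal_mul_I (-φ τ)
  have hboundary (τ) (hτ : τ ∈ Icc a b) : ‖(f τ)⁻¹ • (I * cexp (-I * φ τ))‖ ≤ m⁻¹ := by
    rw [norm_smul, hnorm, mul_one, Real.norm_of_nonneg (inv_pos.2 (hf0 τ hτ)).le]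
    exact hinv_le τ hτ
  have ha : a ∈ Icc a b := left_mem_Icc.2 hab
  have hb : b ∈ Icc a b := right_mem_Icc.2 hab
  have hvariation : ‖∫ τ in a..b, deriv (fun τ => (f τ)⁻¹) τ • (I * cexp (-I * φ τ))‖ ≤ m⁻¹ :=
    (norm_integral_deriv_smul_le_abs_sub hab hinv_mono fun τ _ => (hnorm τ).le).trans <|
      abs_sub_le_of_nonneg_of_le (inv_pos.2 (hf0 b hb)).le (hinv_le b hb)
        (inv_pos.2 (hf0 a ha)).le (hinv_le a ha)
  rw [integral_cexp_neg_I_mul_eq_sub_integral hab hφ hf (fun τ hτ => (hf0 τ hτ).ne')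
    (intervalIntegrable_deriv_of_monotoneOn_or_antitoneOn (uIcc_of_le hab ▸ hinv_mono))]
  calc _ ≤ m⁻¹ + m⁻¹ + m⁻¹ := by
        refine (norm_sub_le _ _).trans (add_le_add ((norm_sub_le _ _).trans ?_) hvariation)
        exact add_le_add (hboundary b hb) (hboundary a ha)
    _ = 3 / m := by ring

lemma norm_integral_cexp_neg_I_mul_le {φ f : ℝ → ℝ} {a b m : ℝ} (hm : 0 < m)
    (hab : a ≤ b) (hφ : ∀ τ ∈ Icc a b, HasDerivAt φ (f τ) τ) (hf : DifferentiableOn ℝ f (Icc a b))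
    (hmono : MonotoneOn f (Icc a b) ∨ AntitoneOn f (Icc a b))
    (hfm : (∀ τ ∈ Icc a b, m ≤ f τ) ∨ (∀ τ ∈ Icc a b, f τ ≤ -m)) :
    ‖∫ τ in a..b, cexp (-I * φ τ)‖ ≤ 3 / m := by
  rcases hfm with hfm | hfm
  · exact norm_integral_cexp_neg_I_mul_le_of_le_deriv hm hab hφ hf hmono hfm
  -- replacing `φ` by `-φ` conjugates the integrand
  have h := norm_integral_cexp_neg_I_mul_le_of_le_deriv (φ := -φ) (f := -f) hm hab
    (fun τ hτ => (hφ τ hτ).neg) hf.neg (hmono.symm.imp AntitoneOn.neg MonotoneOn.neg)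
    fun τ hτ => le_neg.2 (hfm τ hτ)
  have hconj (τ : ℝ) : cexp (-I * ↑((-φ) τ)) = (starRingEnd ℂ) (cexp (-I * φ τ)) := by
    rw [← exp_conj]; congr 1; simp [conj_ofReal]
  simpa only [hconj, intervalIntegral.intervalIntegral_conj, norm_conj] using h

theorem tendsto_inv_mul_integral_cexp_neg_I_mul {φ f : ℝ → ℝ} {T₀ m : ℝ} (hm : 0 < m)
    (hφ : ∀ τ ∈ Ioi T₀, HasDerivAt φ (f τ) τ) (hf : DifferentiableOn ℝ f (Ioi T₀))
    (hmono : MonotoneOn f (Ioi T₀) ∨ AntitoneOn f (Ioi T₀))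
    (hfm : (∀ τ ∈ Ioi T₀, m ≤ f τ) ∨ (∀ τ ∈ Ioi T₀, f τ ≤ -m)) :
    Tendsto (fun T : ℝ => (1 / (T : ℂ)) * ∫ τ in T..2 * T, cexp (-I * φ τ)) atTop (𝓝 0) := by
  have hbound : ∀ᶠ T : ℝ in atTop,
      ‖(1 / (T : ℂ)) * ∫ τ in T..2 * T, cexp (-I * φ τ)‖ ≤ 3 / m / T := by
    filter_upwards [eventually_gt_atTop (max T₀ 0)] with T hT
    have hT0 : 0 < T := (le_max_right _ _).trans_lt hT
    have hsub : Icc T (2 * T) ⊆ Ioi T₀ := fun τ hτ =>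
      (le_max_left _ _).trans_lt (hT.trans_le hτ.1)
    have hint := norm_integral_cexp_neg_I_mul_le hm (by linarith) (fun τ hτ => hφ τ (hsub hτ))
      (hf.mono hsub) (hmono.imp (·.mono hsub) (·.mono hsub))
      (hfm.imp (fun h τ hτ => h τ (hsub hτ)) (fun h τ hτ => h τ (hsub hτ)))
    rw [norm_mul, norm_div, norm_one, norm_real, Real.norm_of_nonneg hT0.le, div_mul_eq_mul_div,
      one_mul, div_le_div_iff_of_pos_right hT0]
    exact hint
  exact squeeze_zero_norm' hbound (tendsto_const_nhds.div_atTop tendsto_id)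


lemma ContDiffOn.differentiableOn_of_hasDerivAt {𝕜 F : Type*} [NontriviallyNormedField 𝕜]
    [NormedAddCommGroup F] [NormedSpace 𝕜 F] {γ γ' : 𝕜 → F} {s : Set 𝕜}
    (hγ : ContDiffOn 𝕜 2 γ s) (hs : IsOpen s) (hγ' : ∀ x ∈ s, HasDerivAt γ (γ' x) x) :
    DifferentiableOn 𝕜 γ' s :=
  ((hγ.deriv_of_isOpen hs (by norm_num)).differentiableOn one_ne_zero).congr
    fun x hx => (hγ' x hx).deriv.symm

theorem stmt_11 (r : ℕ) (T₀ T₁ : ℝ) (γ γ' : Fin r → ℝ → ℝ)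
    (hF : ∀ j, MemF T₀ T₁ (γ j) (γ' j))
    (hadm : Admissible r γ γ')
    (P₀ : Finset ℕ) (hP : ∀ p ∈ P₀, p.Prime)
    (n : Fin r → ℕ → ℤ) (hne : ∃ j, ∃ p ∈ P₀, n j p ≠ 0) :
    Filter.Tendsto
      (fun T : ℝ => (1 / (T : ℂ)) *
        ∫ τ in T..2*T, ∏ j, ∏ p ∈ P₀,
          Complex.exp (-Complex.I * (n j p : ℂ) * (γ j τ : ℂ) * (Real.log p : ℂ)))
      Filter.atTop (nhds 0) := by
  obtain ⟨j₀, p₀, hp₀, hn₀⟩ := hne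
  set c : Fin r → ℝ := fun j => ∑ p ∈ P₀, (n j p : ℝ) * Real.log p
  have hc : c ≠ 0 := fun h => hn₀ (eq_zero_of_sum_mul_log_prime_eq_zero hP (congrFun h j₀) hp₀)
  obtain ⟨m, hm, T', -, hmono, hsign⟩ := hadm c hc
  have hγ (j : Fin r) : (∀ τ ∈ Ioi T₀, HasDerivAt (γ j) (γ' j τ) τ) ∧
      DifferentiableOn ℝ (γ' j) (Ioi T₀) := by
    obtain ⟨-, -, -, -, -, hderiv, hC2, -⟩ := hF j
    have hderiv' (τ) (hτ : τ ∈ Ioi T₀) := hderiv τ (le_of_lt hτ)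
    exact ⟨hderiv',
      (hC2.mono Ioi_subset_Ici_self).differentiableOn_of_hasDerivAt isOpen_Ioi hderiv'⟩
  have hsub : Ioi (max T₀ T') ⊆ Ioi T₀ := Ioi_subset_Ioi (le_max_left _ _)
  have hsub' : Ioi (max T₀ T') ⊆ Ioi T' := Ioi_subset_Ioi (le_max_right _ _)
  simp_rw [prod_prod_cexp_neg_I_mul P₀ n (fun p : ℕ => Real.log p)]
  refine tendsto_inv_mul_integral_cexp_neg_I_mul (f := fun τ => ∑ j, c j * γ' j τ)
    (T₀ := max T₀ T') hm ?_ ?_ ?_ ?_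
  · exact fun τ hτ => HasDerivAt.fun_sum fun j _ => ((hγ j).1 τ (hsub hτ)).const_mul (c j)
  · exact DifferentiableOn.fun_sum fun j _ => ((hγ j).2.mono hsub).const_mul (c j)
  · exact hmono.imp (·.mono hsub') (·.mono hsub')
  · exact hsign.imp (fun h τ hτ => (h τ (hsub' hτ)).le) (fun h τ hτ => (h τ (hsub' hτ)).le)
end
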